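/- Let V be a 2n-dimensional real vector space with non-degenerate 2-form Ω, and let L := Ω∧(−). For 2 ≤ s ≤ n−2, if ω is a non-degenerate 2-form and θ_{(s)} a 1-form with d(ω^s) = θ_{(s)}∧ω^s, then dω = (1/s)·θ_{(s)}∧ω. -/

import Mathlib

/-!
Put `α := s • dω - θ ∧ ω`, a 3-form. The two expressions for `d(ω^s)` give `ω^(s-1) ∧ α = 0`,
so it suffices that wedging with `ω^k` is injective on 3-forms when `k + 3 ≤ n`.

This is the hard Lefschetz mechanism. Since `ω^n ≠ 0`, the map `φ ↦ φ ⌋ ω` from covectors to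
vectors is injective: otherwise `ω` lies in the exterior algebra of a hyperplane `ker φ`, where
`ω^n`, of degree `2n`, must vanish. Inverting it yields the operator `Λ`, built from
contractions, that satisfies `[Λ, ω ∧ -] = 2n - 2q` on `q`-forms. Split `α = γ + ω ∧ β` with
`Λγ = 0` and `β` a 1-form. Applying `Λ^k` to `ω^k γ + ω^(k+1) β = 0` gives `c₁ γ + c₂ ω β = 0`
with `c₁, c₂ ≠ 0`, because `k + 3 ≤ n`. Applying `Λ` once more gives `β = 0`, and then `γ = 0`.
-/

namespace ExteriorAlgebra

local infixl:70 "⌋" => CliffordAlgebra.contractLeft (Q := 0)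

section CommRing

variable {R M : Type*} [CommRing R] [AddCommGroup M] [Module R M]

theorem ι_mem_exteriorPower_one (m : M) : ι R m ∈ ⋀[R]^1 M := by
  rw [exteriorPower, pow_one]
  exact LinearMap.mem_range_self _ m

theorem ι_mul_ι_anticomm (u v : M) : ι R u * ι R v = -(ι R v * ι R u) :=
  eq_neg_of_add_eq_zero_left (ι_add_mul_swap u v)

theorem exteriorPower_two_induction {a : ExteriorAlgebra R M} (ha : a ∈ ⋀[R]^2 M)
    {C : ExteriorAlgebra R M → Prop} (mul : ∀ u v : M, C (ι R u * ι R v))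
    (add : ∀ x y, C x → C y → C (x + y)) : C a := by
  rw [exteriorPower, pow_two] at ha
  refine Submodule.mul_induction_on ha ?_ add
  rintro _ ⟨u, rfl⟩ _ ⟨v, rfl⟩
  exact mul u v

theorem commute_of_mem_exteriorPower_two {a : ExteriorAlgebra R M} (ha : a ∈ ⋀[R]^2 M)
    (x : ExteriorAlgebra R M) : Commute a x := by
  have commute_ι (m : M) : Commute a (ι R m) := by
    refine exteriorPower_two_induction ha (C := (Commute · (ι R m))) (fun u v => ?_)
      fun _ _ hx hy => hx.add_left hy
    rw [Commute, SemiconjBy, mul_assoc, ι_mul_ι_anticomm v m, mul_neg, ← mul_assoc,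
      ι_mul_ι_anticomm u m, neg_mul, neg_neg, mul_assoc]
  induction x using CliffordAlgebra.induction with
  | algebraMap r => exact (Algebra.commutes' r a).symm
  | ι m => exact commute_ι m
  | mul x y hx hy => exact hx.mul_right hy
  | add x y hx hy => exact hx.add_right hy

theorem contractLeft_eq_zero_of_mem_zero (φ : Module.Dual R M) {x : ExteriorAlgebra R M}
    (hx : x ∈ ⋀[R]^0 M) : φ⌋x = 0 := by
  obtain ⟨r, rfl⟩ := Submodule.mem_one.mp hx
  exact CliffordAlgebra.contractLeft_algebraMap _ _ _

theorem contractLeft_mem (φ : Module.Dual R M) {q : ℕ} {x : ExteriorAlgebra R M}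
    (hx : x ∈ ⋀[R]^(q + 1) M) : φ⌋x ∈ ⋀[R]^q M := by
  suffices ∀ i, ∀ x ∈ ⋀[R]^i M, φ⌋x ∈ ⋀[R]^(i - 1) M from this (q + 1) x hx
  intro i x hx
  induction hx using Submodule.pow_induction_on_left' with
  | algebraMap r => simp [CliffordAlgebra.contractLeft_algebraMap]
  | add x y i _ _ hx hy => simpa only [map_add] using add_mem hx hy
  | mem_mul _ hm i x hx ih =>
    obtain ⟨u, rfl⟩ := hm
    rw [CliffordAlgebra.contractLeft_ι_mul, Nat.succ_sub_one]
    refine sub_mem (Submodule.smul_mem _ _ hx) ?_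
    rcases i with _ | i
    · rw [contractLeft_eq_zero_of_mem_zero φ hx, mul_zero]
      exact zero_mem _
    · simpa [add_comm 1 i] using
        SetLike.mul_mem_graded (ι_mem_exteriorPower_one u) ih

theorem contractLeft_mul_of_mem_two (φ : Module.Dual R M) {a : ExteriorAlgebra R M}
    (ha : a ∈ ⋀[R]^2 M) (x : ExteriorAlgebra R M) : φ⌋(a * x) = (φ⌋a) * x + a * (φ⌋x) := by
  refine exteriorPower_two_induction ha (C := fun a => φ⌋(a * x) = (φ⌋a) * x + a * (φ⌋x))
    (fun u v => ?_) fun p q hp hq => ?_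
  · simp only [mul_assoc, CliffordAlgebra.contractLeft_ι_mul, CliffordAlgebra.contractLeft_ι,
      Algebra.algebraMap_eq_smul_one, mul_sub, sub_mul, smul_mul_assoc, mul_smul_comm, mul_one]
    abel
  · rw [add_mul, map_add, map_add, hp, hq, add_mul, add_mul]
    abel

theorem sum_ι_mul_contractLeft {I : Type*} [Fintype I] (c : I → M) (γ : I → Module.Dual R M)
    (hframe : ∀ m, ∑ i, γ i m • c i = m) {q : ℕ} {x : ExteriorAlgebra R M}
    (hx : x ∈ ⋀[R]^q M) : ∑ i, ι R (c i) * (γ i⌋x) = (q : R) • x := by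
  induction hx using Submodule.pow_induction_on_left' with
  | algebraMap r => simp [CliffordAlgebra.contractLeft_algebraMap]
  | add x y i _ _ hx hy => simp only [map_add, mul_add, Finset.sum_add_distrib, hx, hy, smul_add]
  | mem_mul _ hm i x _ ih =>
    obtain ⟨u, rfl⟩ := hm
    have hterm (j : I) : ι R (c j) * (γ j⌋(ι R u * x))
        = γ j u • (ι R (c j) * x) + ι R u * (ι R (c j) * (γ j⌋x)) := by
      rw [CliffordAlgebra.contractLeft_ι_mul, mul_sub, mul_smul_comm, ← mul_assoc,
        ι_mul_ι_anticomm (c j) u, neg_mul, mul_assoc, sub_neg_eq_add]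
    have hu : ∑ j, γ j u • (ι R (c j) * x) = ι R u * x := by
      simp_rw [← smul_mul_assoc, ← Finset.sum_mul, ← map_smul, ← map_sum, hframe]
    rw [Finset.sum_congr rfl fun j _ => hterm j, Finset.sum_add_distrib, ← Finset.mul_sum, ih, hu,
      mul_smul_comm, Nat.cast_succ, add_smul, one_smul, add_comm]

noncomputable def sharp (ω : ⋀[R]^2 M) : Module.Dual R M →ₗ[R] M :=
  (LinearEquiv.ofInjective (ι R) ι_leftInverse.injective).symm.toLinearMap ∘ₗ
    ((CliffordAlgebra.contractLeft.flip (ω : ExteriorAlgebra R M)).codRestrict _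
      fun φ => by simpa [exteriorPower] using contractLeft_mem φ (q := 1) ω.2)

theorem ι_sharp (ω : ⋀[R]^2 M) (φ : Module.Dual R M) : ι R (sharp ω φ) = φ⌋ω := by
  exact congrArg Subtype.val
    ((LinearEquiv.ofInjective (ι R) ι_leftInverse.injective).apply_symm_apply _)

theorem apply_sharp_comm (ω : ⋀[R]^2 M) (φ ψ : Module.Dual R M) :
    φ (sharp ω ψ) = -ψ (sharp ω φ) := by
  have h := CliffordAlgebra.contractLeft_comm φ ψ (ω : ExteriorAlgebra R M)
  rw [← ι_sharp, ← ι_sharp, CliffordAlgebra.contractLeft_ι, CliffordAlgebra.contractLeft_ι,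
    ← map_neg] at h
  exact (algebraMap_inj (M := M) _ _).mp h

theorem sub_ι_mul_contractLeft_mem {φ : Module.Dual R M} {v : M} (hv : φ v = 1)
    {a : ExteriorAlgebra R M} (ha : a ∈ ⋀[R]^2 M) :
    a - ι R v * (φ⌋a) ∈ (LinearMap.ker φ).map (ι R) ^ 2 := by
  refine exteriorPower_two_induction ha (C := fun a => a - ι R v * (φ⌋a) ∈ _)
    (fun x y => ?_) fun p q hp hq => ?_
  · have hproj (z : M) : z - φ z • v ∈ LinearMap.ker φ := by simp [hv]
    have hxy : ι R x * ι R y - ι R v * (φ⌋(ι R x * ι R y))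
        = ι R (x - φ x • v) * ι R (y - φ y • v) := by
      simp only [CliffordAlgebra.contractLeft_ι_mul, CliffordAlgebra.contractLeft_ι,
        Algebra.algebraMap_eq_smul_one, map_sub, map_smul, mul_sub, sub_mul, mul_smul_comm,
        smul_mul_assoc, mul_one, ι_sq_zero, smul_zero, sub_zero, ι_mul_ι_anticomm v x,
        smul_neg]
      abel
    rw [hxy, pow_two]
    exact Submodule.mul_mem_mul ⟨_, hproj x, rfl⟩ ⟨_, hproj y, rfl⟩
  · convert add_mem hp hq using 1
    rw [map_add, mul_add]
    abel

end CommRing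

section Field

variable {K V : Type*} [Field K] [AddCommGroup V] [Module K V]

theorem eq_zero_of_mem_map_ι_pow [FiniteDimensional K V] {N : Submodule K V} {m : ℕ}
    (hm : Module.finrank K N < m) {x : ExteriorAlgebra K V}
    (hx : x ∈ N.map (ι K) ^ m) : x = 0 := by
  have hbot : ⋀[K]^m N = ⊥ := by
    rw [← Submodule.finrank_eq_zero, exteriorPower.finrank_eq, Nat.choose_eq_zero_of_lt hm]
  have hmap : N.map (ι K) ^ m = (⋀[K]^m N).map (map N.subtype).toLinearMap := by
    rw [exteriorPower, Submodule.map_pow, ι_range_map_map, Submodule.range_subtype]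
  rwa [hmap, hbot, Submodule.map_bot, Submodule.mem_bot] at hx

theorem sharp_injective [FiniteDimensional K V] {n : ℕ} (hdim : Module.finrank K V = 2 * n)
    (ω : ⋀[K]^2 V) (hω : (ω : ExteriorAlgebra K V) ^ n ≠ 0) : Function.Injective (sharp ω) := by
  refine (injective_iff_map_eq_zero _).mpr fun φ hφ => ?_
  by_contra hne
  obtain ⟨u, hu⟩ := DFunLike.ne_iff.mp hne
  set v := (φ u)⁻¹ • u
  have hv : φ v = 1 := by simp [v, inv_mul_cancel₀ hu]
  have hcontract : φ⌋ω = 0 := by rw [← ι_sharp, hφ, map_zero]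
  have hker : Module.finrank K (LinearMap.ker φ) < 2 * n := by
    have := LinearMap.finrank_range_add_finrank_ker φ
    rw [LinearMap.range_eq_top.mpr fun c => ⟨c • v, by simp [hv]⟩, finrank_top,
      Module.finrank_self] at this
    omega
  have hmem := sub_ι_mul_contractLeft_mem hv ω.2
  rw [hcontract, mul_zero, sub_zero] at hmem
  refine hω (eq_zero_of_mem_map_ι_pow hker ?_)
  rw [pow_mul]
  exact Submodule.pow_mem_pow _ hmem n

end Field

section Lefschetz

variable {R M I : Type*} [CommRing R] [AddCommGroup M] [Module R M] [Fintype I]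
  (b : Module.Basis I R M) {ω : ⋀[R]^2 M} {σ : I → Module.Dual R M}

/-- When `sharp ω (σ i) = b i`, this is twice the adjoint `Λ` of the Lefschetz operator
`ω * -`. -/
noncomputable def lefschetzDual (σ : I → Module.Dual R M) : Module.End R (ExteriorAlgebra R M) :=
  ∑ i, CliffordAlgebra.contractLeft (b.coord i) ∘ₗ CliffordAlgebra.contractLeft (σ i)

theorem lefschetzDual_apply (σ : I → Module.Dual R M) (x : ExteriorAlgebra R M) :
    lefschetzDual b σ x = ∑ i, b.coord i⌋(σ i⌋x) := by
  simp [lefschetzDual, LinearMap.sum_apply]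

theorem lefschetzDual_eq_zero_of_mem_one {x : ExteriorAlgebra R M} (hx : x ∈ ⋀[R]^1 M) :
    lefschetzDual b σ x = 0 := by
  rw [lefschetzDual_apply]
  exact Finset.sum_eq_zero fun i _ =>
    contractLeft_eq_zero_of_mem_zero _ (contractLeft_mem (σ i) (q := 0) hx)

theorem lefschetzDual_mem {q : ℕ} {x : ExteriorAlgebra R M} (hx : x ∈ ⋀[R]^(q + 2) M) :
    lefschetzDual b σ x ∈ ⋀[R]^q M := by
  rw [lefschetzDual_apply]
  exact Submodule.sum_mem _ fun i _ => contractLeft_mem _ (contractLeft_mem (σ i) hx)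

variable {b} (hσ : ∀ i, sharp ω (σ i) = b i)
include hσ

theorem sum_neg_apply_smul_sharp_coord (m : M) : ∑ i, (-σ i) m • sharp ω (b.coord i) = m := by
  set ψ := ∑ i, b.coord i m • σ i
  have hψ : sharp ω ψ = m := by simp [ψ, hσ, Module.Basis.coord_apply, b.sum_repr]
  have hterm (i : I) : (-σ i) m • sharp ω (b.coord i) = ψ (b i) • sharp ω (b.coord i) := by
    rw [← hψ, LinearMap.neg_apply, apply_sharp_comm, neg_neg, hσ]
  simp_rw [Finset.sum_congr rfl fun i _ => hterm i, ← map_smul, ← map_sum,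
    b.sum_dual_apply_smul_coord, hψ]

theorem lefschetzDual_mul {q : ℕ} {x : ExteriorAlgebra R M} (hx : x ∈ ⋀[R]^q M) :
    lefschetzDual b σ (ω * x)
      = ω * lefschetzDual b σ x + ((Fintype.card I : R) - 2 * q) • x := by
  have hterm (i : I) : b.coord i⌋(σ i⌋(ω * x))
      = b.coord i (b i) • x - ι R (b i) * (b.coord i⌋x)
        + (ι R (sharp ω (b.coord i)) * (σ i⌋x) + ω * (b.coord i⌋(σ i⌋x))) := by
    rw [contractLeft_mul_of_mem_two _ ω.2, ← ι_sharp, hσ, map_add,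
      CliffordAlgebra.contractLeft_ι_mul, contractLeft_mul_of_mem_two _ ω.2, ← ι_sharp]
  have hcard : ∑ i, b.coord i (b i) = (Fintype.card I : R) := by
    simp [Module.Basis.coord_apply]
  have euler₁ := sum_ι_mul_contractLeft b b.coord (fun m => by
    simp [Module.Basis.coord_apply, b.sum_repr m]) hx
  have euler₂ := sum_ι_mul_contractLeft _ _ (sum_neg_apply_smul_sharp_coord hσ) hx
  simp only [map_neg, LinearMap.neg_apply, mul_neg, Finset.sum_neg_distrib] at euler₂
  rw [lefschetzDual_apply, lefschetzDual_apply, Finset.sum_congr rfl fun i _ => hterm i,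
    Finset.sum_add_distrib, Finset.sum_add_distrib, Finset.sum_sub_distrib, ← Finset.sum_smul,
    hcard, euler₁, neg_eq_iff_eq_neg.mp euler₂, ← Finset.mul_sum]
  module

theorem lefschetzDual_pow_succ_mul {q : ℕ} {x : ExteriorAlgebra R M} (hx : x ∈ ⋀[R]^q M)
    (hΛx : lefschetzDual b σ x = 0) (m : ℕ) :
    lefschetzDual b σ (ω ^ (m + 1) * x)
      = (((m : R) + 1) * ((Fintype.card I : R) - 2 * q - 2 * m)) • (ω ^ m * x) := by
  induction m with
  | zero =>
    rw [zero_add, pow_one, lefschetzDual_mul hσ hx, hΛx, mul_zero, pow_zero, one_mul]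
    push_cast
    module
  | succ m ih =>
    have hmem : ω ^ (m + 1) * x ∈ ⋀[R]^((m + 1) • 2 + q) M :=
      SetLike.mul_mem_graded (SetLike.pow_mem_graded _ ω.2) hx
    rw [pow_succ', mul_assoc, lefschetzDual_mul hσ hmem, ih, mul_smul_comm, ← mul_assoc,
      ← pow_succ', ← add_smul, smul_eq_mul]
    push_cast
    congr 1
    ring

theorem lefschetzDual_pow_mul {q : ℕ} {x : ExteriorAlgebra R M} (hx : x ∈ ⋀[R]^q M)
    (hΛx : lefschetzDual b σ x = 0) (m j : ℕ) :
    (lefschetzDual b σ ^ j) (ω ^ (m + j) * x)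
      = (∏ i ∈ Finset.range j,
          (((m + i : ℕ) : R) + 1) * ((Fintype.card I : R) - 2 * q - 2 * (m + i : ℕ))) •
        (ω ^ m * x) := by
  induction j with
  | zero => simp
  | succ j ih =>
    rw [pow_succ, Module.End.mul_apply, ← add_assoc, lefschetzDual_pow_succ_mul hσ hx hΛx,
      map_smul, ih, smul_smul, Finset.prod_range_succ, mul_comm]

end Lefschetz

section CharZero

variable {K V I : Type*} [Field K] [CharZero K] [AddCommGroup V] [Module K V] [Fintype I]
  {b : Module.Basis I K V} {ω : ⋀[K]^2 V} {σ : I → Module.Dual K V}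

theorem exists_lefschetzDual_pow_mul (hσ : ∀ i, sharp ω (σ i) = b i) {q m j : ℕ}
    (hqmj : 2 * (q + m + j) ≤ Fintype.card I) {x : ExteriorAlgebra K V} (hx : x ∈ ⋀[K]^q V)
    (hΛx : lefschetzDual b σ x = 0) :
    ∃ c : K, c ≠ 0 ∧ (lefschetzDual b σ ^ j) (ω ^ (m + j) * x) = c • (ω ^ m * x) := by
  refine ⟨_, Finset.prod_ne_zero_iff.mpr fun i hi => ?_, lefschetzDual_pow_mul hσ hx hΛx m j⟩
  have hi : i < j := Finset.mem_range.mp hi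
  refine mul_ne_zero (Nat.cast_add_one_ne_zero _) ?_
  rw [sub_sub, sub_ne_zero]
  exact_mod_cast (by omega : Fintype.card I ≠ 2 * q + 2 * (m + i))

theorem eq_zero_of_pow_mul_eq_zero_of_mem_three_of_sharp (hσ : ∀ i, sharp ω (σ i) = b i)
    {n k : ℕ} (hcard : Fintype.card I = 2 * n) (hk : k + 3 ≤ n) {α : ExteriorAlgebra K V}
    (hα : α ∈ ⋀[K]^3 V) (h : ω ^ k * α = 0) : α = 0 := by
  set Λ := lefschetzDual b σ
  have hc : (Fintype.card I : K) - 2 ≠ 0 := by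
    rw [sub_ne_zero]
    exact_mod_cast (by omega : Fintype.card I ≠ 2)
  set β := ((Fintype.card I : K) - 2)⁻¹ • Λ α
  have hβ : β ∈ ⋀[K]^1 V := Submodule.smul_mem _ _ (lefschetzDual_mem b hα)
  have hΛβ : Λ β = 0 := lefschetzDual_eq_zero_of_mem_one b hβ
  have hΛωβ : Λ (ω * β) = ((Fintype.card I : K) - 2) • β := by
    rw [lefschetzDual_mul hσ hβ, hΛβ, mul_zero, zero_add, Nat.cast_one, mul_one]
  set γ := α - ω * β
  have hγ : γ ∈ ⋀[K]^3 V := sub_mem hα (SetLike.mul_mem_graded ω.2 hβ)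
  have hΛγ : Λ γ = 0 := by rw [map_sub, hΛωβ, smul_inv_smul₀ hc, sub_self]
  obtain ⟨c₁, hc₁, h₁⟩ := exists_lefschetzDual_pow_mul hσ (m := 0) (j := k) (by omega) hγ hΛγ
  obtain ⟨c₂, hc₂, h₂⟩ := exists_lefschetzDual_pow_mul hσ (m := 1) (j := k) (by omega) hβ hΛβ
  have hsum : c₁ • γ + c₂ • (ω * β) = 0 := by
    have : ω ^ (0 + k) * γ + ω ^ (1 + k) * β = ω ^ k * α := by
      rw [zero_add, add_comm 1, pow_succ, mul_assoc, ← mul_add, sub_add_cancel]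
    have := congrArg (Λ ^ k) this
    rwa [map_add, h₁, h₂, h, map_zero, pow_zero, one_mul, pow_one] at this
  have hβ0 : β = 0 := by
    have := congrArg Λ hsum
    rw [map_add, map_smul, map_smul, hΛγ, hΛωβ, smul_zero, zero_add, smul_smul, map_zero] at this
    exact (smul_eq_zero.mp this).resolve_left (mul_ne_zero hc₂ hc)
  have hγ0 : γ = 0 := by
    rw [hβ0, mul_zero, smul_zero, add_zero] at hsum
    exact (smul_eq_zero.mp hsum).resolve_left hc₁
  have hαγβ : α = γ + ω * β := (sub_add_cancel α _).symm
  rw [hαγβ, hγ0, hβ0, mul_zero, add_zero]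

theorem eq_zero_of_pow_mul_eq_zero_of_mem_three [FiniteDimensional K V] {n k : ℕ}
    (hdim : Module.finrank K V = 2 * n) (hω : (ω : ExteriorAlgebra K V) ^ n ≠ 0)
    (hk : k + 3 ≤ n) {α : ExteriorAlgebra K V} (hα : α ∈ ⋀[K]^3 V) (h : ω ^ k * α = 0) :
    α = 0 := by
  have hsurj : Function.Surjective (sharp ω) :=
    (LinearMap.injective_iff_surjective_of_finrank_eq_finrank Subspace.dual_finrank_eq).mp
      (sharp_injective hdim ω hω)
  choose σ hσ using fun i => hsurj (Module.finBasis K V i)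
  exact eq_zero_of_pow_mul_eq_zero_of_mem_three_of_sharp hσ (by simpa using hdim) hk hα h

end CharZero

end ExteriorAlgebra

open ExteriorAlgebra

/-- In dimension `2n`, for `2 ≤ s ≤ n−2`: if `ω` is a non-degenerate 2-form (`ω^n ≠ 0`) and
`θ` a 1-form with `d(ω^s) = θ∧ω^s` (where `d(ω^s) = s·dω∧ω^{s−1}` and `dω` is a 3-form),
then `dω = (1/s)·θ∧ω`, i.e. `ω` is locally conformal Kähler-type. -/
theorem stmt9 {W : Type*} [AddCommGroup W] [Module ℝ W] [FiniteDimensional ℝ W]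
    (n s : ℕ) (hdim : Module.finrank ℝ W = 2 * n) (hs2 : 2 ≤ s) (hsn : s ≤ n - 2)
    (d : ExteriorAlgebra ℝ W →ₗ[ℝ] ExteriorAlgebra ℝ W)
    (θ : W) (ω : ⋀[ℝ]^2 W)
    (hnd : (ω : ExteriorAlgebra ℝ W) ^ n ≠ 0)
    (hpow : d ((ω : ExteriorAlgebra ℝ W) ^ s)
      = (s : ℝ) • (d (ω : ExteriorAlgebra ℝ W) * (ω : ExteriorAlgebra ℝ W) ^ (s - 1)))
    (hdω3 : d (ω : ExteriorAlgebra ℝ W) ∈ ⋀[ℝ]^3 W)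
    (heq : d ((ω : ExteriorAlgebra ℝ W) ^ s)
      = ExteriorAlgebra.ι ℝ θ * (ω : ExteriorAlgebra ℝ W) ^ s) :
    d (ω : ExteriorAlgebra ℝ W)
      = ((1 : ℝ) / s) • (ExteriorAlgebra.ι ℝ θ * (ω : ExteriorAlgebra ℝ W)) := by
  set a : ExteriorAlgebra ℝ W := ↑ω
  have hcomm (x : ExteriorAlgebra ℝ W) : a ^ (s - 1) * x = x * a ^ (s - 1) :=
    ((commute_of_mem_exteriorPower_two ω.2 x).pow_left (s - 1)).eq
  have hα : (s : ℝ) • d a - ι ℝ θ * a ∈ ⋀[ℝ]^3 W :=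
    sub_mem (Submodule.smul_mem _ _ hdω3)
      (SetLike.mul_mem_graded (ι_mem_exteriorPower_one θ) ω.2)
  have hkill : a ^ (s - 1) * ((s : ℝ) • d a - ι ℝ θ * a) = 0 := by
    rw [mul_sub, mul_smul_comm, hcomm, ← hpow, heq, hcomm, mul_assoc, ← pow_succ',
      Nat.sub_add_cancel (by omega), sub_self]
  have hs : (s : ℝ) ≠ 0 := Nat.cast_ne_zero.mpr (by omega)
  rw [one_div, eq_inv_smul_iff₀ hs, ← sub_eq_zero]
  exact eq_zero_of_pow_mul_eq_zero_of_mem_three hdim hnd (by omega) hα hkill
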